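/- Fix i ∈ {1,…,k} with t_i ≥ 2, d_{i−1} < d_i and c_i < c_{i+1} (with d_0 = 0, c_{k+1} = n+1), and write t = t_i, d = d_i, c = c_i. Let M be the subladder of L with the same upper outside corners and with lower outside corners (d_1,c_1),…,(d_{i−1},c_{i−1}),(d−1,c+1),(d_{i+1},c_{i+1}),…,(d_k,c_k), and set t' = (t_1,…,t_{i−1},t_i−1,t_{i+1},…,t_k). Let N = L ∖ {x_{d,c}} with lower outside corners (d_1,c_1),…,(d_{i−1},c_{i−1}),(d−1,c),(d,c+1),(d_{i+1},c_{i+1}),…,(d_k,c_k) and τ = (t_1,…,t_{i−1},t_i,t_i,t_{i+1},…,t_k). Then, regarding all ideals in K[L], one has I_{t'}(M) = I_τ(N) + Q', where Q' is the ideal generated by the (t−1)×(t−1) minors of X with rows i_1 < … < i_{t−1} < d and columns c < j_1 < … < j_{t−1} ≤ n, all of whose entries lie in L_i ∩ M. -/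

import Mathlib

open MvPolynomial

/-- The data of a two-sided ladder inside an `m × n` matrix of indeterminates,
with upper outside corners `(b i, a i)` and lower outside corners `(d j, c j)`,
together with a vector `t` of minor sizes, subject to the standing assumptions. -/
structure LadderData where
  m : ℕ
  n : ℕ
  h : ℕ
  k : ℕ
  hpos : 0 < h
  kpos : 0 < k
  hmn : m ≤ n
  b : Fin h → ℕ
  a : Fin h → ℕ
  d : Fin k → ℕ
  c : Fin k → ℕ
  t : Fin k → ℕ
  b_mono : StrictMono b
  a_mono : StrictMono a
  b_first : b ⟨0, hpos⟩ = 1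
  b_le : ∀ i, b i ≤ m
  a_pos : ∀ i, 1 ≤ a i
  a_last : a ⟨h - 1, Nat.sub_lt hpos Nat.one_pos⟩ = n
  d_mono : Monotone d
  c_mono : Monotone c
  d_pos : ∀ j, 1 ≤ d j
  d_last : d ⟨k - 1, Nat.sub_lt kpos Nat.one_pos⟩ = m
  c_first : c ⟨0, kpos⟩ = 1
  c_le : ∀ j, c j ≤ n
  corners_distinct : ∀ j j' : Fin k, d j = d j' → c j = c j' → j = j'
  t_pos : ∀ j, 1 ≤ t j
  step_d : ∀ (j : ℕ) (hj : j + 1 < k),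
    d ⟨j, Nat.lt_of_succ_lt hj⟩ + t ⟨j + 1, hj⟩ < d ⟨j + 1, hj⟩ + t ⟨j, Nat.lt_of_succ_lt hj⟩
  step_c : ∀ (j : ℕ) (hj : j + 1 < k),
    c ⟨j, Nat.lt_of_succ_lt hj⟩ + t ⟨j, Nat.lt_of_succ_lt hj⟩ < c ⟨j + 1, hj⟩ + t ⟨j + 1, hj⟩

namespace LadderData

/-- The set of positions (row, column) of the indeterminates of the ladder `L`. -/
def L (D : LadderData) : Set (ℕ × ℕ) :=
  {p | ∃ (i : Fin D.h) (j : Fin D.k),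
    D.b i ≤ p.1 ∧ p.1 ≤ D.m ∧ 1 ≤ p.2 ∧ p.2 ≤ D.a i ∧
    1 ≤ p.1 ∧ p.1 ≤ D.d j ∧ D.c j ≤ p.2 ∧ p.2 ≤ D.n}

/-- The one-sided subladder `L_j` with lower outside corner `(d j, c j)`. -/
def Lj (D : LadderData) (j : Fin D.k) : Set (ℕ × ℕ) :=
  {p ∈ D.L | p.1 ≤ D.d j ∧ D.c j ≤ p.2}

end LadderData

/-- The ideal of `K[V]` (`V` a set of positions of indeterminates) generated by the
`s × s` minors of the generic matrix all of whose entries lie in `S`. -/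
noncomputable def minorsIdeal (K : Type*) [Field K] (V S : Set (ℕ × ℕ)) (s : ℕ) :
    Ideal (MvPolynomial ↥V K) :=
  Ideal.span {f | ∃ r cc : Fin s → ℕ, StrictMono r ∧ StrictMono cc ∧
    (∀ p q, (r p, cc q) ∈ S) ∧
    ∃ hmem : ∀ p q, ((r p, cc q) : ℕ × ℕ) ∈ V,
    f = (Matrix.of fun p q =>
      (MvPolynomial.X (⟨(r p, cc q), hmem p q⟩ : V) : MvPolynomial ↥V K)).det}

/-- The mixed ladder determinantal ideal `I_t(L) = I_{t_1}(L_1) + ⋯ + I_{t_k}(L_k) ⊆ K[L]`. -/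
noncomputable def LadderData.It (D : LadderData) (K : Type*) [Field K] :
    Ideal (MvPolynomial ↥D.L K) :=
  ⨆ j : Fin D.k, minorsIdeal K D.L (D.Lj j) (D.t j)

/-- Every entry of the ladder is involved in one of the minors generating `I_t(L)`. -/
def LadderData.Nondeg (D : LadderData) : Prop :=
  ∀ p ∈ D.L, ∃ (j : Fin D.k) (r cc : Fin (D.t j) → ℕ),
    StrictMono r ∧ StrictMono cc ∧ (∀ u v, (r u, cc v) ∈ D.Lj j) ∧ ∃ u v, (r u, cc v) = p

namespace LadderData

/-- `d_{i−1}`, with the convention `d_0 = 0` (the fixed paper index `i` corresponds to the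
0-based index `i0`). -/
def dPrev (D : LadderData) (i0 : Fin D.k) : ℕ :=
  if h : 0 < (i0 : ℕ) then D.d ⟨(i0 : ℕ) - 1, by have := i0.isLt; omega⟩ else 0

/-- `c_{i+1}`, with the convention `c_{k+1} = n + 1`. -/
def cNext (D : LadderData) (i0 : Fin D.k) : ℕ :=
  if h : (i0 : ℕ) + 1 < D.k then D.c ⟨(i0 : ℕ) + 1, h⟩ else D.n + 1

/-- The ladder `N = L ∖ {x_{d,c}}`. -/
def Nset (D : LadderData) (i0 : Fin D.k) : Set (ℕ × ℕ) :=
  D.L \ {(D.d i0, D.c i0)}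

/-- The rows of the lower outside corners
`(d_1,c_1),…,(d_{i−1},c_{i−1}),(d−1,c),(d,c+1),(d_{i+1},c_{i+1}),…,(d_k,c_k)` of `N`. -/
def dN (D : LadderData) (i0 : Fin D.k) (l : Fin (D.k + 1)) : ℕ :=
  if h1 : (l : ℕ) < (i0 : ℕ) then D.d ⟨(l : ℕ), by have := i0.isLt; omega⟩
  else if (l : ℕ) = (i0 : ℕ) then D.d i0 - 1
  else if (l : ℕ) = (i0 : ℕ) + 1 then D.d i0
  else D.d ⟨(l : ℕ) - 1, by have := l.isLt; have := D.kpos; omega⟩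

/-- The columns of the lower outside corners of `N`. -/
def cN (D : LadderData) (i0 : Fin D.k) (l : Fin (D.k + 1)) : ℕ :=
  if h1 : (l : ℕ) < (i0 : ℕ) then D.c ⟨(l : ℕ), by have := i0.isLt; omega⟩
  else if (l : ℕ) = (i0 : ℕ) then D.c i0
  else if (l : ℕ) = (i0 : ℕ) + 1 then D.c i0 + 1
  else D.c ⟨(l : ℕ) - 1, by have := l.isLt; have := D.kpos; omega⟩

/-- `τ = (t_1,…,t_{i−1},t_i,t_i,t_{i+1},…,t_k)`. -/
def tN (D : LadderData) (i0 : Fin D.k) (l : Fin (D.k + 1)) : ℕ :=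
  if h1 : (l : ℕ) ≤ (i0 : ℕ) then D.t ⟨(l : ℕ), by have := i0.isLt; omega⟩
  else D.t ⟨(l : ℕ) - 1, by have := l.isLt; have := D.kpos; omega⟩

/-- The mixed ladder determinantal ideal `I_τ(N)`, regarded as an ideal of `K[L]`. -/
noncomputable def IτN (D : LadderData) (i0 : Fin D.k) (K : Type*) [Field K] :
    Ideal (MvPolynomial ↥D.L K) :=
  ⨆ l : Fin (D.k + 1),
    minorsIdeal K D.L {p ∈ D.Nset i0 | p.1 ≤ D.dN i0 l ∧ D.cN i0 l ≤ p.2} (D.tN i0 l)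

end LadderData

open Classical in
/-- The minor of the generic matrix with rows `r` and columns `cc`, with the convention
that it equals `0` whenever it involves an entry outside of `V`. -/
noncomputable def minorOrZero (K : Type*) [Field K] (V : Set (ℕ × ℕ)) {s : ℕ}
    (r cc : Fin s → ℕ) : MvPolynomial ↥V K :=
  if h : ∀ p q, ((r p, cc q) : ℕ × ℕ) ∈ V then
    (Matrix.of fun p q => (MvPolynomial.X (⟨(r p, cc q), h p q⟩ : V) : MvPolynomial ↥V K)).det
  else 0

namespace LadderData

/-- The rows of the lower outside corners of
`M = (d_1,c_1),…,(d_{i−1},c_{i−1}),(d−1,c+1),(d_{i+1},c_{i+1}),…,(d_k,c_k)`. -/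
def dM (D : LadderData) (i0 l : Fin D.k) : ℕ := if l = i0 then D.d i0 - 1 else D.d l

/-- The columns of the lower outside corners of `M`. -/
def cM (D : LadderData) (i0 l : Fin D.k) : ℕ := if l = i0 then D.c i0 + 1 else D.c l

/-- `t' = (t_1,…,t_{i−1},t_i−1,t_{i+1},…,t_k)`. -/
def tM (D : LadderData) (i0 l : Fin D.k) : ℕ := if l = i0 then D.t i0 - 1 else D.t l

/-- The subladder `M` of `L` with the same upper outside corners and with lower outside
corners `(d_1,c_1),…,(d_{i−1},c_{i−1}),(d−1,c+1),(d_{i+1},c_{i+1}),…,(d_k,c_k)`. -/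
def MsetOf (D : LadderData) (i0 : Fin D.k) : Set (ℕ × ℕ) :=
  {p ∈ D.L | ∃ l : Fin D.k, p.1 ≤ D.dM i0 l ∧ D.cM i0 l ≤ p.2}

/-- The mixed ladder determinantal ideal `I_{t'}(M)`, regarded as an ideal of `K[L]`. -/
noncomputable def ItM (D : LadderData) (i0 : Fin D.k) (K : Type*) [Field K] :
    Ideal (MvPolynomial ↥D.L K) :=
  ⨆ l : Fin D.k,
    minorsIdeal K D.L {p ∈ D.MsetOf i0 | p.1 ≤ D.dM i0 l ∧ D.cM i0 l ≤ p.2} (D.tM i0 l)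

end LadderData

/-- The ideal `Q' ⊆ K[L]` generated by the `(t−1) × (t−1)` minors of `X` with rows
`i_1 < … < i_{t−1} < d` and columns `c < j_1 < … < j_{t−1}`, all of whose entries lie in
`L_i ∩ M`. -/
noncomputable def offCornerMinorsIdeal (D : LadderData) (i0 : Fin D.k) (s : ℕ)
    (K : Type*) [Field K] : Ideal (MvPolynomial ↥D.L K) :=
  Ideal.span {f | ∃ ri js : Fin s → ℕ, StrictMono ri ∧ StrictMono js ∧
    (∀ p, ri p < D.d i0) ∧ (∀ q, D.c i0 < js q) ∧
    (∀ p q, (ri p, js q) ∈ D.Lj i0 ∩ D.MsetOf i0) ∧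
    ∃ hmem : ∀ p q, ((ri p, js q) : ℕ × ℕ) ∈ D.L,
    f = (Matrix.of fun p q =>
      (MvPolynomial.X (⟨(ri p, js q), hmem p q⟩ : D.L) : MvPolynomial ↥D.L K)).det}

/-! Away from the `i`-th corner the pieces of `I_{t'}(M)` and `I_τ(N)` coincide: the
subladders agree because `d_{i−1} < d` and `c < c_{i+1}` keep `x_{d,c}` out of every `M_l`.
The `i`-th piece of `I_{t'}(M)` is `Q'` itself. The two `t`-minor pieces of `I_τ(N)` at the
split corner lie in `Q'` by Laplace expansion: along the first column for the one with rows
`< d`, and along the last row for the one with columns `> c`, since every complementary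
`(t−1)`-minor then avoids row `d` and column `c`. -/

section Laplace

variable {R : Type*} [CommRing R] {s : ℕ}

theorem Matrix.det_mem_span_det_submatrix_succAbove_succ
    (A : Matrix (Fin (s + 1)) (Fin (s + 1)) R) :
    A.det ∈ Ideal.span
      (Set.range fun i : Fin (s + 1) => (A.submatrix i.succAbove Fin.succ).det) := by
  rw [Matrix.det_succ_column_zero]
  exact Ideal.sum_mem _ fun i _ => Ideal.mul_mem_left _ _ (Ideal.subset_span ⟨i, rfl⟩)

theorem Matrix.det_mem_span_det_submatrix_last_succAbove
    (A : Matrix (Fin (s + 1)) (Fin (s + 1)) R) :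
    A.det ∈ Ideal.span
      (Set.range fun j : Fin (s + 1) => (A.submatrix (Fin.last s).succAbove j.succAbove).det) := by
  rw [Matrix.det_succ_row _ (Fin.last s)]
  exact Ideal.sum_mem _ fun j _ => Ideal.mul_mem_left _ _ (Ideal.subset_span ⟨j, rfl⟩)

end Laplace

section MinorsIdeal

variable (K : Type*) [Field K] {V S T : Set (ℕ × ℕ)} {s : ℕ}

theorem minorsIdeal_succ_le_of_right_mem
    (hST : ∀ x y y', (x, y) ∈ S → (x, y') ∈ S → y < y' → (x, y') ∈ T) :
    minorsIdeal K V S (s + 1) ≤ minorsIdeal K V T s := by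
  refine Ideal.span_le.2 ?_
  rintro _ ⟨r, cc, hr, hcc, hS, hmem, rfl⟩
  refine Ideal.span_le.2 ?_ (Matrix.det_mem_span_det_submatrix_succAbove_succ _)
  rintro _ ⟨i, rfl⟩
  exact Ideal.subset_span ⟨r ∘ i.succAbove, cc ∘ Fin.succ,
    hr.comp (Fin.strictMono_succAbove i), hcc.comp Fin.strictMono_succ,
    fun _ q => hST _ _ _ (hS _ 0) (hS _ _) (hcc q.succ_pos),
    fun _ _ => hmem _ _, rfl⟩

theorem minorsIdeal_succ_le_of_above_mem
    (hST : ∀ x x' y, (x, y) ∈ S → (x', y) ∈ S → x' < x → (x', y) ∈ T) :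
    minorsIdeal K V S (s + 1) ≤ minorsIdeal K V T s := by
  refine Ideal.span_le.2 ?_
  rintro _ ⟨r, cc, hr, hcc, hS, hmem, rfl⟩
  refine Ideal.span_le.2 ?_ (Matrix.det_mem_span_det_submatrix_last_succAbove _)
  rintro _ ⟨j, rfl⟩
  exact Ideal.subset_span ⟨r ∘ (Fin.last s).succAbove, cc ∘ j.succAbove,
    hr.comp (Fin.strictMono_succAbove _), hcc.comp (Fin.strictMono_succAbove j),
    fun _ _ => hST _ _ _ (hS (Fin.last s) _) (hS _ _) (hr (by simp [Fin.castSucc_lt_last])),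
    fun _ _ => hmem _ _, rfl⟩

end MinorsIdeal

namespace LadderData

variable (D : LadderData) (i0 : Fin D.k)

-- The subladders `M_l` and `N_l` cut out by the `l`-th lower outside corners of `M` and `N`.
def Mj (l : Fin D.k) : Set (ℕ × ℕ) :=
  {p ∈ D.MsetOf i0 | p.1 ≤ D.dM i0 l ∧ D.cM i0 l ≤ p.2}

def Nj (l : Fin (D.k + 1)) : Set (ℕ × ℕ) :=
  {p ∈ D.Nset i0 | p.1 ≤ D.dN i0 l ∧ D.cN i0 l ≤ p.2}

theorem ItM_eq_iSup (K : Type*) [Field K] :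
    D.ItM i0 K = ⨆ l, minorsIdeal K D.L (D.Mj i0 l) (D.tM i0 l) := rfl

theorem IτN_eq_iSup (K : Type*) [Field K] :
    D.IτN i0 K = ⨆ l, minorsIdeal K D.L (D.Nj i0 l) (D.tN i0 l) := rfl

variable {D i0}

theorem dM_self : D.dM i0 i0 = D.d i0 - 1 := if_pos rfl

theorem cM_self : D.cM i0 i0 = D.c i0 + 1 := if_pos rfl

theorem tM_self : D.tM i0 i0 = D.t i0 - 1 := if_pos rfl

theorem tM_of_ne {l : Fin D.k} (hl : l ≠ i0) : D.tM i0 l = D.t l := if_neg hl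

theorem dN_castSucc_self : D.dN i0 i0.castSucc = D.d i0 - 1 := by
  simp [dN]

theorem cN_castSucc_self : D.cN i0 i0.castSucc = D.c i0 := by
  simp [cN]

theorem dN_succ_self : D.dN i0 i0.succ = D.d i0 := by
  simp [dN]

theorem cN_succ_self : D.cN i0 i0.succ = D.c i0 + 1 := by
  simp [cN]

theorem d_le_dPrev {l : Fin D.k} (hl : l < i0) : D.d l ≤ D.dPrev i0 := by
  rw [dPrev, dif_pos (by omega)]
  exact D.d_mono (Fin.le_def.2 (by dsimp only; omega))

theorem cNext_le_c {l : Fin D.k} (hl : i0 < l) : D.cNext i0 ≤ D.c l := by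
  rw [cNext, dif_pos (by omega)]
  exact D.c_mono (Fin.le_def.2 (by dsimp only; omega))

theorem corner_notMem_MsetOf (hd : D.dPrev i0 < D.d i0) (hc : D.c i0 < D.cNext i0) :
    (D.d i0, D.c i0) ∉ D.MsetOf i0 := by
  rintro ⟨-, l, h1, h2⟩
  rcases lt_trichotomy l i0 with hl | rfl | hl
  · have := d_le_dPrev hl
    simp only [dM, hl.ne, if_false] at h1
    omega
  · have := D.d_pos l
    rw [dM_self] at h1
    omega
  · have := cNext_le_c hl
    simp only [cM, hl.ne', if_false] at h2
    omega

theorem dN_succAbove {l : Fin D.k} (hl : l ≠ i0) :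
    D.dN i0 (i0.succ.succAbove l) = D.dM i0 l := by
  rcases hl.lt_or_gt with hl | hl
  · rw [Fin.succAbove_succ_of_le _ _ hl.le]
    simp [dN, dM, hl, hl.ne]
  · rw [Fin.succAbove_succ_of_lt _ _ hl]
    have : (i0 : ℕ) < l := hl
    simp only [dN, dM, hl.ne', if_false, Fin.val_succ]
    rw [dif_neg (by omega), if_neg (by omega), if_neg (by omega)]
    rfl

theorem cN_succAbove {l : Fin D.k} (hl : l ≠ i0) :
    D.cN i0 (i0.succ.succAbove l) = D.cM i0 l := by
  rcases hl.lt_or_gt with hl | hl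
  · rw [Fin.succAbove_succ_of_le _ _ hl.le]
    simp [cN, cM, hl, hl.ne]
  · rw [Fin.succAbove_succ_of_lt _ _ hl]
    have : (i0 : ℕ) < l := hl
    simp only [cN, cM, hl.ne', if_false, Fin.val_succ]
    rw [dif_neg (by omega), if_neg (by omega), if_neg (by omega)]
    rfl

theorem tN_succAbove (l : Fin D.k) : D.tN i0 (i0.succ.succAbove l) = D.t l := by
  rcases le_or_gt l i0 with hl | hl
  · rw [Fin.succAbove_succ_of_le _ _ hl]
    simp [tN, hl]
  · rw [Fin.succAbove_succ_of_lt _ _ hl, tN, dif_neg (by simp only [Fin.val_succ]; omega)]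
    rfl

theorem tN_succ_self : D.tN i0 i0.succ = D.t i0 := by
  rw [tN, dif_neg (by simp)]
  rfl

theorem tN_castSucc_self : D.tN i0 i0.castSucc = D.t i0 := by
  rw [← Fin.succAbove_succ_self, tN_succAbove]

theorem Nj_succAbove (hd : D.dPrev i0 < D.d i0) (hc : D.c i0 < D.cNext i0) {l : Fin D.k}
    (hl : l ≠ i0) : D.Nj i0 (i0.succ.succAbove l) = D.Mj i0 l := by
  ext p
  simp only [Nj, Mj, dN_succAbove hl, cN_succAbove hl, Set.mem_ofPred_eq]
  refine and_congr_left fun ⟨h1, h2⟩ =>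
    ⟨fun ⟨hL, _⟩ => ⟨hL, l, h1, h2⟩, fun hM => ⟨hM.1, ?_⟩⟩
  rintro rfl
  exact corner_notMem_MsetOf hd hc hM

theorem mem_Mj_self {p : ℕ × ℕ} :
    p ∈ D.Mj i0 i0 ↔ p ∈ D.L ∧ p.1 < D.d i0 ∧ D.c i0 < p.2 := by
  have := D.d_pos i0
  simp only [Mj, MsetOf, dM_self, cM_self, Set.mem_ofPred_eq]
  constructor
  · rintro ⟨⟨hL, -⟩, h1, h2⟩
    exact ⟨hL, by omega, by omega⟩
  · rintro ⟨hL, h1, h2⟩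
    exact ⟨⟨hL, i0, by rw [dM_self]; omega, by rw [cM_self]; omega⟩, by omega, by omega⟩

theorem mem_Nj_castSucc_self {p : ℕ × ℕ} :
    p ∈ D.Nj i0 i0.castSucc ↔ p ∈ D.L ∧ p.1 < D.d i0 ∧ D.c i0 ≤ p.2 := by
  have := D.d_pos i0
  simp only [Nj, Nset, dN_castSucc_self, cN_castSucc_self, Set.mem_sdiff,
    Set.mem_singleton_iff, Set.mem_ofPred_eq]
  constructor
  · rintro ⟨⟨hL, -⟩, h1, h2⟩
    exact ⟨hL, by omega, h2⟩
  · rintro ⟨hL, h1, h2⟩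
    exact ⟨⟨hL, by rintro rfl; omega⟩, by omega, h2⟩

theorem mem_Nj_succ_self {p : ℕ × ℕ} :
    p ∈ D.Nj i0 i0.succ ↔ p ∈ D.L ∧ p.1 ≤ D.d i0 ∧ D.c i0 < p.2 := by
  simp only [Nj, Nset, dN_succ_self, cN_succ_self, Set.mem_sdiff,
    Set.mem_singleton_iff, Set.mem_ofPred_eq]
  constructor
  · rintro ⟨⟨hL, -⟩, h1, h2⟩
    exact ⟨hL, h1, by omega⟩
  · rintro ⟨hL, h1, h2⟩
    exact ⟨⟨hL, by rintro rfl; omega⟩, h1, by omega⟩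

variable (K : Type*) [Field K]

theorem minorsIdeal_Mj_self (s : ℕ) :
    minorsIdeal K D.L (D.Mj i0 i0) s = offCornerMinorsIdeal D i0 s K := by
  unfold minorsIdeal offCornerMinorsIdeal
  congr 1
  ext f
  constructor
  · rintro ⟨r, cc, hr, hcc, hS, hmem, rfl⟩
    have hS' := fun p q => mem_Mj_self.1 (hS p q)
    exact ⟨r, cc, hr, hcc, fun p => (hS' p p).2.1, fun q => (hS' q q).2.2,
      fun p q => ⟨⟨hmem p q, (hS' p q).2.1.le, (hS' p q).2.2.le⟩, (hS p q).1⟩, hmem, rfl⟩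
  · rintro ⟨r, cc, hr, hcc, hrow, hcol, -, hmem, rfl⟩
    exact ⟨r, cc, hr, hcc, fun p q => mem_Mj_self.2 ⟨hmem p q, hrow p, hcol q⟩, hmem, rfl⟩

theorem minorsIdeal_Nj_castSucc_self_le (s : ℕ) :
    minorsIdeal K D.L (D.Nj i0 i0.castSucc) (s + 1) ≤ minorsIdeal K D.L (D.Mj i0 i0) s :=
  minorsIdeal_succ_le_of_right_mem K fun _ _ _ hy hy' hlt => by
    rw [mem_Nj_castSucc_self] at hy hy'
    exact mem_Mj_self.2 ⟨hy'.1, hy'.2.1, by omega⟩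

theorem minorsIdeal_Nj_succ_self_le (s : ℕ) :
    minorsIdeal K D.L (D.Nj i0 i0.succ) (s + 1) ≤ minorsIdeal K D.L (D.Mj i0 i0) s :=
  minorsIdeal_succ_le_of_above_mem K fun _ _ _ hx hx' hlt => by
    rw [mem_Nj_succ_self] at hx hx'
    exact mem_Mj_self.2 ⟨hx'.1, by omega, hx'.2.2⟩

end LadderData

open LadderData

theorem ItM_eq_IτN_add_offCornerMinors_general (K : Type*) [Field K]
    (D : LadderData) (i0 : Fin D.k)
    (hd : D.dPrev i0 < D.d i0) (hc : D.c i0 < D.cNext i0)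
    (s : ℕ) (hs : s + 1 = D.t i0) :
    D.ItM i0 K = D.IτN i0 K + offCornerMinorsIdeal D i0 s K := by
  have htM : D.tM i0 i0 = s := by rw [tM_self]; omega
  rw [ItM_eq_iSup, IτN_eq_iSup, Submodule.add_eq_sup, ← minorsIdeal_Mj_self, ← htM]
  set Mblock := fun l => minorsIdeal K D.L (D.Mj i0 l) (D.tM i0 l)
  set Nblock := fun l => minorsIdeal K D.L (D.Nj i0 l) (D.tN i0 l)
  have hNM {l : Fin D.k} (hl : l ≠ i0) : Nblock (i0.succ.succAbove l) = Mblock l := by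
    simp only [Nblock, Mblock, Nj_succAbove hd hc hl, tN_succAbove, tM_of_ne hl]
  apply le_antisymm
  · refine iSup_le fun l => ?_
    rcases eq_or_ne l i0 with rfl | hl
    · exact le_sup_right
    · exact le_sup_of_le_left ((hNM hl).symm.le.trans (le_iSup Nblock _))
  · refine sup_le (iSup_le fun l' => ?_) (le_iSup Mblock i0)
    obtain ⟨l, hle⟩ : ∃ l, Nblock l' ≤ Mblock l := by
      rcases i0.succ.eq_self_or_eq_succAbove l' with rfl | ⟨l, rfl⟩
      · refine ⟨i0, ?_⟩
        simp only [Nblock, Mblock, tN_succ_self, ← hs, htM]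
        exact minorsIdeal_Nj_succ_self_le K s
      rcases eq_or_ne l i0 with rfl | hl
      · refine ⟨l, ?_⟩
        simp only [Nblock, Mblock, Fin.succAbove_succ_self, tN_castSucc_self, ← hs, htM]
        exact minorsIdeal_Nj_castSucc_self_le K s
      · exact ⟨l, (hNM hl).le⟩
    exact hle.trans (le_iSup Mblock l)

/-- **Lemma.** Fix `i` with `t_i ≥ 2`, `d_{i−1} < d_i`, `c_i < c_{i+1}` and write `t = t_i`,
`d = d_i`, `c = c_i`.  Regarding all ideals in `K[L]`, one has
`I_{t'}(M) = I_τ(N) + Q'`, where `Q'` is generated by the `(t−1) × (t−1)` minors with rows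
`< d`, columns `> c` and all entries in `L_i ∩ M`. -/
theorem ItM_eq_IτN_add_offCornerMinors (K : Type*) [Field K]
    (D : LadderData) (hnd : D.Nondeg) (i0 : Fin D.k)
    (hd : D.dPrev i0 < D.d i0) (hc : D.c i0 < D.cNext i0)
    (s : ℕ) (hs1 : 1 ≤ s) (hs : s + 1 = D.t i0) :
    D.ItM i0 K = D.IτN i0 K + offCornerMinorsIdeal D i0 s K :=
  ItM_eq_IτN_add_offCornerMinors_general K D i0 hd hc s hs
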